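/- arXiv:2603.23068 — 5 statements merged into one kernel-verified Lean document; each statement's English description precedes it below -/
import Mathlib

section
/- Let η : [0,τ] → ℝ² be a smooth, simple, closed curve parametrized by arc-length whose signed curvature κ has constant sign σ ∈ {−1, 1}, and whose exterior angle δ = ∠(η̇(τ⁻), η̇(0⁺)) at the endpoint satisfies σδ ∈ [0, π). Then there exists t* ∈ (0, τ) with |κ(t*)| ≥ π/τ = π/L(η). -/
open Real Set Filter

/-- let `η : [0,τ] → ℝ²` be a smooth, simple, closed curve parametrized by
arc-length with angle map `α` (so `η̇ = (cos α, sin α)` and the signed curvature is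
`κ = α̇`), whose curvature has constant sign `σ ∈ {-1,1}` and whose exterior angle
`δ = ∠(η̇(τ⁻), η̇(0⁺))` satisfies `σδ ∈ [0,π)`. Then there is `t* ∈ (0,τ)` with
`|κ(t*)| ≥ π/τ = π/L(η)`. -/
theorem stmt5 (τ : ℝ) (hτ : 0 < τ) (η : ℝ → ℝ × ℝ) (α : ℝ → ℝ)
    (hα : ContDiff ℝ (⊤ : ℕ∞) α)
    (hη : ∀ t, HasDerivAt η (Real.cos (α t), Real.sin (α t)) t)
    (hsimple : Set.InjOn η (Set.Ico 0 τ))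
    (hclosed : η 0 = η τ)
    (σ : ℝ) (hσ : σ = 1 ∨ σ = -1)
    (hsign : ∀ t ∈ Set.Icc (0:ℝ) τ, 0 ≤ σ * deriv α t)
    (δ : ℝ) (hδ : δ = Real.Angle.toReal ((α 0 - α τ : ℝ) : Real.Angle))
    (hσδ : σ * δ ∈ Set.Ico (0:ℝ) Real.pi) :
    ∃ t ∈ Set.Ioo (0:ℝ) τ, Real.pi / τ ≤ |deriv α t| := by
  by_contra hcon
  push_neg at hcon
  have hdiff : Differentiable ℝ α := hα.differentiable (by simp)
  have hcontα : Continuous α := hα.continuous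
  have hπτ : π / τ * τ = π := div_mul_cancel₀ _ (ne_of_gt hτ)
  -- f t = (π/τ) t - α t is strictly increasing on [0,τ]
  have key : ∀ c : ℝ, c = 1 ∨ c = -1 →
      c * α τ - c * α 0 < π := by
    intro c hc
    have hmono : StrictMonoOn (fun t => π / τ * t - c * α t) (Icc 0 τ) := by
      apply strictMonoOn_of_deriv_pos (convex_Icc 0 τ)
      · exact (((continuous_const.mul continuous_id).sub
          (continuous_const.mul hcontα)).continuousOn)
      · intro t ht
        rw [interior_Icc] at ht
        have hd : HasDerivAt (fun t => π / τ * t - c * α t)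
            (π / τ * 1 - c * deriv α t) t :=
          ((hasDerivAt_id t).const_mul (π / τ)).sub
            (((hdiff t).hasDerivAt).const_mul c)
        rw [hd.deriv]
        have h1 : c * deriv α t ≤ |deriv α t| := by
          rcases hc with rfl | rfl
          · simpa using le_abs_self (deriv α t)
          · simpa using neg_le_abs (deriv α t)
        have := hcon t ht
        nlinarith
    have := hmono (left_mem_Icc.2 hτ.le) (right_mem_Icc.2 hτ.le) hτ
    simp only [mul_zero, sub_zero] at this
    nlinarith
  have h1 : α τ - α 0 < π := by simpa using key 1 (Or.inl rfl)
  have h2 : -π < α τ - α 0 := by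
    have := key (-1) (Or.inr rfl)
    nlinarith
  -- hence δ = α 0 - α τ
  have hδ' : δ = α 0 - α τ := by
    rw [hδ, Real.Angle.toReal_coe_eq_self_iff_mem_Ioc]
    constructor <;> simp <;> linarith
  -- σ * α is monotone on [0,τ]
  have hmono : MonotoneOn (fun t => σ * α t) (Icc 0 τ) := by
    apply monotoneOn_of_deriv_nonneg (convex_Icc 0 τ)
      ((continuous_const.mul hcontα).continuousOn)
      (((hdiff.const_mul σ)).differentiableOn)
    intro t ht
    rw [interior_Icc] at ht
    show 0 ≤ deriv (fun y => σ * α y) t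
    rw [deriv_const_mul _ (hdiff t)]
    exact hsign t (Icc_subset_Icc le_rfl le_rfl (Ioo_subset_Icc_self ht))
  have hστ : σ * α τ ≤ σ * α 0 := by
    have h0 : 0 ≤ σ * δ := hσδ.1
    rw [hδ'] at h0
    nlinarith
  -- α is constant on [0,τ]
  have hconst : ∀ t ∈ Icc (0:ℝ) τ, α t = α 0 := by
    intro t ht
    have hl : σ * α 0 ≤ σ * α t := hmono (left_mem_Icc.2 hτ.le) ht ht.1
    have hr : σ * α t ≤ σ * α τ := hmono ht (right_mem_Icc.2 hτ.le) ht.2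
    have hσ0 : σ ≠ 0 := by rcases hσ with rfl | rfl <;> norm_num
    have : σ * α t = σ * α 0 := le_antisymm (hr.trans hστ) hl
    exact mul_left_cancel₀ hσ0 this
  -- FTC: η τ - η 0 = ∫ (cos α t, sin α t)
  have hint : IntervalIntegrable (fun t => (Real.cos (α t), Real.sin (α t)))
      MeasureTheory.volume 0 τ :=
    ((Real.continuous_cos.comp hcontα).prodMk (Real.continuous_sin.comp hcontα)).intervalIntegrable 0 τ
  have hftc : ∫ t in (0:ℝ)..τ, (Real.cos (α t), Real.sin (α t)) = η τ - η 0 :=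
    intervalIntegral.integral_eq_sub_of_hasDerivAt (fun t _ => hη t) hint
  have hcongr : ∫ t in (0:ℝ)..τ, (Real.cos (α t), Real.sin (α t))
      = ∫ t in (0:ℝ)..τ, ((Real.cos (α 0), Real.sin (α 0)) : ℝ × ℝ) := by
    apply intervalIntegral.integral_congr
    intro t ht
    rw [uIcc_of_le hτ.le] at ht
    simp only [hconst t ht]
  rw [hcongr, intervalIntegral.integral_const] at hftc
  rw [← hclosed, sub_self] at hftc
  have h0 : (τ - 0) • ((Real.cos (α 0), Real.sin (α 0)) : ℝ × ℝ) = 0 := hftc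
  have h0' := congrArg Prod.fst h0
  have h0'' := congrArg Prod.snd h0
  simp [Prod.smul_def, smul_eq_mul] at h0' h0''
  have hcos : τ * Real.cos (α 0) = 0 := by
    rcases h0' with h | h
    · linarith
    · rw [h]; ring
  have hsin : τ * Real.sin (α 0) = 0 := by
    rcases h0'' with h | h
    · linarith
    · rw [h]; ring
  have hc0 : Real.cos (α 0) = 0 := by
    rcases mul_eq_zero.1 hcos with h | h
    · exact absurd h (ne_of_gt hτ)
    · exact h
  have hs0 : Real.sin (α 0) = 0 := by
    rcases mul_eq_zero.1 hsin with h | h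
    · exact absurd h (ne_of_gt hτ)
    · exact h
  have := Real.sin_sq_add_cos_sq (α 0)
  rw [hc0, hs0] at this
  norm_num at this
end

section
/- Fix b ≥ 5 odd, q = b/2, and ζ > 0. The arc Γ_ζ(t) = (√(t^b + ζ), t), t ≥ 0, satisfies, for all 0 < t̄ < t: L(Γ_ζ|_{[t̄, t]}) − |Γ_ζ(t̄) − Γ_ζ(t)| ≤ (1/2) q² (q−1) t^{b−1} (1 − t̄/t)². -/
/-!
Write `f(u) = √(u^b + ζ)`, so that the arc is the graph of `f` over the second coordinate and
its length is `∫ √(1 + f'²)`. The integrand lies below its tangent line at `p = f'(t)` plus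
`(f' - p)² / 2`; the tangent-line part integrates to `((t - t̄) + p (f t - f t̄)) / √(1 + p²)`,
which Cauchy–Schwarz bounds by the chord. For the error, `f'` is nonnegative and increasing,
`f'(t) ≤ q t^(q-1)` and `f'' ≤ 2q(q-1) t^(q-2)` on `[t̄, t]`, hence
`(f'(s) - f'(t))² ≤ (f'(t) - f'(s)) f'(t) ≤ 2q²(q-1) t^(b-3) (t - s)`, which integrates to the
claimed bound.
-/

open Real Set Filter MeasureTheory intervalIntegral

theorem sqrt_one_add_sq_le_tangent (x p : ℝ) :
    √(1 + x ^ 2) ≤ (1 + p * x) / √(1 + p ^ 2) + (x - p) ^ 2 / 2 := by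
  have hc : 1 ≤ √(1 + p ^ 2) := Real.one_le_sqrt.mpr (by nlinarith)
  have hmul : √(1 + x ^ 2) * √(1 + p ^ 2) ≤ 1 + p * x + (x - p) ^ 2 / 2 := by
    rw [← Real.sqrt_mul (by positivity), Real.sqrt_le_iff]
    -- the gap is `((x - p) * (x + p)) ^ 2 / 4`
    constructor <;> nlinarith [sq_nonneg ((x - p) * (x + p)), sq_nonneg (x + p)]
  rw [← sub_le_iff_le_add, le_div_iff₀ (by positivity)]
  nlinarith [sq_nonneg (x - p)]

theorem integral_sqrt_one_add_deriv_sq_le {f : ℝ → ℝ} {a b : ℝ} (hab : a ≤ b)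
    (hf : ∀ x ∈ Icc a b, DifferentiableAt ℝ f x) (hf' : ContinuousOn (deriv f) (Icc a b))
    (p : ℝ) :
    ∫ x in a..b, √(1 + deriv f x ^ 2)
      ≤ √((f a - f b) ^ 2 + (a - b) ^ 2) + (∫ x in a..b, (deriv f x - p) ^ 2) / 2 := by
  rw [← uIcc_of_le hab] at hf hf'
  set c := √(1 + p ^ 2)
  have hc : 0 < c := by positivity
  have hint : IntervalIntegrable (deriv f) volume a b := hf'.intervalIntegrable
  have hint2 : IntervalIntegrable (fun x => (deriv f x - p) ^ 2) volume a b :=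
    ((hf'.sub continuousOn_const).pow 2).intervalIntegrable
  have hchord : (b - a + p * (f b - f a)) / c ≤ √((f a - f b) ^ 2 + (a - b) ^ 2) := by
    rw [div_le_iff₀ hc, ← Real.sqrt_mul (by positivity)]
    exact Real.le_sqrt_of_sq_le (by nlinarith [sq_nonneg (p * (b - a) - (f b - f a))])
  calc ∫ x in a..b, √(1 + deriv f x ^ 2)
      ≤ ∫ x in a..b, ((1 + p * deriv f x) / c + (deriv f x - p) ^ 2 / 2) :=
        integral_mono_on hab ((continuousOn_const.add (hf'.pow 2)).sqrt).intervalIntegrable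
          (((intervalIntegrable_const.add (hint.const_mul p)).div_const c).add (hint2.div_const 2))
          fun x _ => sqrt_one_add_sq_le_tangent _ p
    _ = (b - a + p * (f b - f a)) / c + (∫ x in a..b, (deriv f x - p) ^ 2) / 2 := by
        rw [integral_add ((intervalIntegrable_const.add (hint.const_mul p)).div_const c)
            (hint2.div_const 2), intervalIntegral.integral_div, intervalIntegral.integral_div,
          integral_add intervalIntegrable_const (hint.const_mul p),
          intervalIntegral.integral_const_mul, integral_deriv_eq_sub hf hint]
        simp
    _ ≤ _ := by gcongr

theorem mul_add_mul_mul_sqrt_le {c x z : ℝ} (hc : 2 ≤ c) (hx : 0 ≤ x) (hz : 0 ≤ z) :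
    (c * x + 2 * (c + 1) * z) * √x ≤ 2 * c * ((x + z) * √(x + z)) := by
  refine le_of_sq_le_sq ?_ (by positivity)
  rw [mul_pow, mul_pow, mul_pow, mul_pow, Real.sq_sqrt hx, Real.sq_sqrt (by positivity)]
  have h₁ : 0 ≤ 2 * c - 1 := by linarith
  have h₂ : 0 ≤ 2 * c * (c - 1) - 1 := by nlinarith
  nlinarith [mul_nonneg (mul_nonneg h₁ (mul_nonneg hx hx)) hz,
    mul_nonneg h₂ (mul_nonneg hx (mul_nonneg hz hz)),
    mul_nonneg (sq_nonneg c) (pow_nonneg hx 3), mul_nonneg (sq_nonneg c) (pow_nonneg hz 3)]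

theorem sqrt_pow_mul_sqrt_pow {u : ℝ} (hu : 0 ≤ u) (m n : ℕ) :
    √(u ^ m) * √(u ^ (m + 2 * n)) = u ^ (m + n) := by
  rw [← Real.sqrt_mul (by positivity), ← pow_add, show m + (m + 2 * n) = 2 * (m + n) by ring,
    pow_mul', Real.sqrt_sq (by positivity)]

noncomputable def arcSlope (b : ℕ) (ζ u : ℝ) : ℝ := b * u ^ (b - 1) / (2 * √(u ^ b + ζ))

noncomputable def arcSlopeDeriv (b : ℕ) (ζ u : ℝ) : ℝ :=
  b * u ^ (b - 2) * ((b - 2) * u ^ b + 2 * (b - 1) * ζ) / (4 * ((u ^ b + ζ) * √(u ^ b + ζ)))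

theorem hasDerivAt_sqrt_pow_add (b : ℕ) {ζ u : ℝ} (h : 0 < u ^ b + ζ) :
    HasDerivAt (fun u => √(u ^ b + ζ)) (arcSlope b ζ u) u := by
  simpa [arcSlope] using ((hasDerivAt_pow b u).add_const ζ).sqrt h.ne'

theorem hasDerivAt_arcSlope {b : ℕ} (hb : 2 ≤ b) {ζ u : ℝ} (h : 0 < u ^ b + ζ) :
    HasDerivAt (arcSlope b ζ) (arcSlopeDeriv b ζ u) u := by
  obtain ⟨n, rfl⟩ := Nat.exists_eq_add_of_le' hb
  have hS : √(u ^ (n + 2) + ζ) ≠ 0 := (Real.sqrt_pos.mpr h).ne'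
  show HasDerivAt (fun v => ((n + 2 : ℕ) : ℝ) * v ^ (n + 1) / (2 * √(v ^ (n + 2) + ζ))) _ u
  refine (((hasDerivAt_pow (n + 1) u).const_mul ((n + 2 : ℕ) : ℝ)).div
    ((hasDerivAt_sqrt_pow_add (n + 2) h).const_mul 2) (mul_ne_zero two_ne_zero hS)).congr_deriv ?_
  simp only [arcSlopeDeriv, arcSlope]
  -- with `ζ = S ^ 2 - u ^ b` the identity becomes rational in `u` and `S`
  have hζ : ζ = √(u ^ (n + 2) + ζ) ^ 2 - u ^ (n + 2) := by rw [Real.sq_sqrt h.le]; ring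
  set S := √(u ^ (n + 2) + ζ)
  rw [hζ]
  push_cast
  field_simp
  ring

theorem arcSlope_nonneg (b : ℕ) {ζ u : ℝ} (hu : 0 ≤ u) : 0 ≤ arcSlope b ζ u := by
  unfold arcSlope; positivity

theorem arcSlopeDeriv_nonneg {b : ℕ} (hb : 2 ≤ b) {ζ u : ℝ} (hζ : 0 ≤ ζ) (hu : 0 ≤ u) :
    0 ≤ arcSlopeDeriv b ζ u := by
  have : (0 : ℝ) ≤ b - 2 := by rw [sub_nonneg]; exact_mod_cast hb
  unfold arcSlopeDeriv
  refine div_nonneg (mul_nonneg (by positivity) (add_nonneg (by positivity) ?_)) (by positivity)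
  exact mul_nonneg (mul_nonneg zero_le_two (by linarith)) hζ

theorem arcSlope_le {b : ℕ} (hb : 2 ≤ b) {ζ u : ℝ} (hζ : 0 ≤ ζ) (hu : 0 < u) :
    arcSlope b ζ u ≤ b / 2 * √(u ^ (b - 2)) := by
  obtain ⟨n, rfl⟩ := Nat.exists_eq_add_of_le' hb
  have hx : 0 < u ^ (n + 2) := by positivity
  rw [arcSlope, div_le_iff₀ (by positivity)]
  calc (↑(n + 2) : ℝ) * u ^ (n + 2 - 1) = ↑(n + 2) * (√(u ^ n) * √(u ^ (n + 2 * 1))) := by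
        rw [sqrt_pow_mul_sqrt_pow hu.le n 1]; rfl
    _ ≤ ↑(n + 2) * (√(u ^ n) * √(u ^ (n + 2) + ζ)) := by gcongr; linarith
    _ = _ := by rw [Nat.add_sub_cancel]; push_cast; ring

theorem arcSlopeDeriv_le {b : ℕ} (hb : 4 ≤ b) {ζ u : ℝ} (hζ : 0 ≤ ζ) (hu : 0 < u) :
    arcSlopeDeriv b ζ u ≤ b * (b - 2) / 2 * √(u ^ (b - 4)) := by
  obtain ⟨n, rfl⟩ := Nat.exists_eq_add_of_le' hb
  have hx : 0 < u ^ (n + 4) := by positivity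
  have hkey := mul_add_mul_mul_sqrt_le (c := (n + 2 : ℝ))
    (by linarith [n.cast_nonneg (α := ℝ)]) hx.le hζ
  rw [arcSlopeDeriv, div_le_iff₀ (by positivity), show n + 4 - 2 = n + 2 by omega]
  push_cast
  set x := u ^ (n + 4)
  calc ((n : ℝ) + 4) * u ^ (n + 2) * ((↑n + 4 - 2) * x + 2 * (↑n + 4 - 1) * ζ)
      = (n + 4) * √(u ^ n) * (((n + 2) * x + 2 * ((n + 2) + 1) * ζ) * √x) := by
        rw [← sqrt_pow_mul_sqrt_pow hu.le n 2]; ring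
    _ ≤ (n + 4) * √(u ^ n) * (2 * (n + 2) * ((x + ζ) * √(x + ζ))) := by gcongr
    _ = _ := by ring

theorem arcSlope_monotoneOn {b : ℕ} (hb : 2 ≤ b) {ζ : ℝ} (hζ : 0 ≤ ζ) :
    MonotoneOn (arcSlope b ζ) (Ioi 0) := by
  have hderiv : ∀ u ∈ Ioi (0 : ℝ), HasDerivAt (arcSlope b ζ) (arcSlopeDeriv b ζ u) u :=
    fun u (hu : 0 < u) => hasDerivAt_arcSlope hb (by positivity)
  refine monotoneOn_of_deriv_nonneg (convex_Ioi 0)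
    (fun u hu => (hderiv u hu).continuousAt.continuousWithinAt) ?_ fun u hu => ?_
  · rw [interior_Ioi]
    exact fun u hu => (hderiv u hu).differentiableAt.differentiableWithinAt
  · rw [interior_Ioi] at hu
    rw [(hderiv u hu).deriv]
    exact arcSlopeDeriv_nonneg hb hζ hu.le

theorem arcSlope_sub_le {b : ℕ} (hb : 4 ≤ b) {ζ s t : ℝ} (hζ : 0 ≤ ζ) (hs : 0 < s)
    (hst : s ≤ t) :
    arcSlope b ζ t - arcSlope b ζ s ≤ b * (b - 2) / 2 * √(t ^ (b - 4)) * (t - s) := by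
  have hderiv : ∀ u ∈ Icc s t, HasDerivAt (arcSlope b ζ) (arcSlopeDeriv b ζ u) u :=
    fun u hu => hasDerivAt_arcSlope (by omega) (by have := hs.trans_le hu.1; positivity)
  have hb2 : (0 : ℝ) ≤ b - 2 := by
    rw [sub_nonneg]; exact_mod_cast (show 2 ≤ b by omega)
  refine (convex_Icc s t).image_sub_le_mul_sub_of_deriv_le
    (fun u hu => (hderiv u hu).continuousAt.continuousWithinAt) ?_ (fun u hu => ?_) s
    (left_mem_Icc.mpr hst) t (right_mem_Icc.mpr hst) hst
  · rw [interior_Icc]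
    exact fun u hu =>
      (hderiv u (Ioo_subset_Icc_self hu)).differentiableAt.differentiableWithinAt
  · rw [interior_Icc] at hu
    rw [(hderiv u (Ioo_subset_Icc_self hu)).deriv]
    calc arcSlopeDeriv b ζ u ≤ b * (b - 2) / 2 * √(u ^ (b - 4)) :=
          arcSlopeDeriv_le hb hζ (hs.trans hu.1)
      _ ≤ b * (b - 2) / 2 * √(t ^ (b - 4)) := by
          have := hs.trans hu.1
          gcongr
          exact hu.2.le

theorem sq_arcSlope_sub_le {b : ℕ} (hb : 4 ≤ b) {ζ s t : ℝ} (hζ : 0 ≤ ζ) (hs : 0 < s)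
    (hst : s ≤ t) :
    (arcSlope b ζ s - arcSlope b ζ t) ^ 2 ≤ b ^ 2 * (b - 2) / 4 * t ^ (b - 3) * (t - s) := by
  have ht : 0 < t := hs.trans_le hst
  have hmono : arcSlope b ζ s ≤ arcSlope b ζ t :=
    arcSlope_monotoneOn (by omega) hζ hs ht hst
  have hlip := arcSlope_sub_le hb hζ hs hst
  have hbound := arcSlope_le (show 2 ≤ b by omega) hζ ht
  have hb2 : (0 : ℝ) ≤ b - 2 := by
    rw [sub_nonneg]; exact_mod_cast (show 2 ≤ b by omega)
  have hpow : √(t ^ (b - 4)) * √(t ^ (b - 2)) = t ^ (b - 3) := by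
    rw [show b - 2 = b - 4 + 2 * 1 by omega, sqrt_pow_mul_sqrt_pow ht.le _ _]
    congr 1; omega
  calc (arcSlope b ζ s - arcSlope b ζ t) ^ 2
      = (arcSlope b ζ t - arcSlope b ζ s) * (arcSlope b ζ t - arcSlope b ζ s) := by ring
    _ ≤ (b * (b - 2) / 2 * √(t ^ (b - 4)) * (t - s)) * arcSlope b ζ t :=
        mul_le_mul hlip (by linarith [arcSlope_nonneg b (ζ := ζ) hs.le]) (by linarith)
          (le_trans (by linarith) hlip)
    _ ≤ (b * (b - 2) / 2 * √(t ^ (b - 4)) * (t - s)) * (b / 2 * √(t ^ (b - 2))) := by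
        have : 0 ≤ t - s := by linarith
        gcongr
    _ = _ := by rw [← hpow]; ring

theorem stmt6_general (b : ℕ) (hb : 5 ≤ b) (q : ℝ) (hq : q = (b : ℝ) / 2)
    (ζ : ℝ) (hζ : 0 < ζ) (tb t : ℝ) (h0 : 0 < tb) (htt : tb < t) :
    (∫ s in tb..t, Real.sqrt (1 + (deriv (fun u : ℝ => Real.sqrt (u ^ b + ζ)) s) ^ 2))
        - Real.sqrt ((Real.sqrt (tb ^ b + ζ) - Real.sqrt (t ^ b + ζ)) ^ 2 + (tb - t) ^ 2)
      ≤ (1/2) * q ^ 2 * (q - 1) * t ^ (b - 1) * (1 - tb / t) ^ 2 := by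
  have hpos : ∀ s ∈ Icc tb t, 0 < s := fun s hs => h0.trans_le hs.1
  have hrad : ∀ s ∈ Icc tb t, 0 < s ^ b + ζ := fun s hs => by have := hpos s hs; positivity
  have hderiv : ∀ s ∈ Icc tb t, HasDerivAt (fun u => √(u ^ b + ζ)) (arcSlope b ζ s) s :=
    fun s hs => hasDerivAt_sqrt_pow_add b (hrad s hs)
  have hslope : ContinuousOn (arcSlope b ζ) (Icc tb t) := fun s hs =>
    (hasDerivAt_arcSlope (by omega) (hrad s hs)).continuousAt.continuousWithinAt
  have hcont : ContinuousOn (deriv fun u => √(u ^ b + ζ)) (Icc tb t) :=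
    hslope.congr fun s hs => (hderiv s hs).deriv
  set K : ℝ := b ^ 2 * (b - 2) / 4 * t ^ (b - 3) with hK
  calc _ ≤ (∫ s in tb..t, (deriv (fun u => √(u ^ b + ζ)) s - arcSlope b ζ t) ^ 2) / 2 := by
        linarith [integral_sqrt_one_add_deriv_sq_le htt.le
          (fun s hs => (hderiv s hs).differentiableAt) hcont (arcSlope b ζ t)]
    _ ≤ (∫ s in tb..t, K * (t - s)) / 2 := by
        gcongr ?_ / 2
        refine integral_mono_on htt.le
          (((hcont.sub continuousOn_const).pow 2).intervalIntegrable_of_Icc htt.le)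
          ((by fun_prop : Continuous fun s => K * (t - s)).intervalIntegrable _ _) fun s hs => ?_
        rw [(hderiv s hs).deriv]
        exact sq_arcSlope_sub_le (by omega) hζ.le (hpos s hs) hs.2
    _ = _ := by
        have hpow : t ^ (b - 1) = t ^ (b - 3) * t ^ 2 := by rw [← pow_add]; congr 1; omega
        rw [intervalIntegral.integral_const_mul,
          integral_sub intervalIntegrable_const intervalIntegrable_id,
          intervalIntegral.integral_const, integral_id, hpow, hq, hK, smul_eq_mul]
        have : t ≠ 0 := (h0.trans htt).ne'
        field_simp
        ring

/-- for `b ≥ 5` odd, `q = b/2`, `ζ > 0`, the arc `Γ_ζ(t) = (√(t^b+ζ), t)`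
satisfies, for all `0 < t̄ < t`,
`L(Γ_ζ|[t̄,t]) − |Γ_ζ(t̄) − Γ_ζ(t)| ≤ (1/2) q² (q−1) t^{b−1} (1 − t̄/t)²`. -/
theorem stmt6 (b : ℕ) (hb : 5 ≤ b) (hodd : Odd b) (q : ℝ) (hq : q = (b : ℝ) / 2)
    (ζ : ℝ) (hζ : 0 < ζ) (tb t : ℝ) (h0 : 0 < tb) (htt : tb < t) :
    (∫ s in tb..t, Real.sqrt (1 + (deriv (fun u : ℝ => Real.sqrt (u ^ b + ζ)) s) ^ 2))
        - Real.sqrt ((Real.sqrt (tb ^ b + ζ) - Real.sqrt (t ^ b + ζ)) ^ 2 + (tb - t) ^ 2)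
      ≤ (1/2) * q ^ 2 * (q - 1) * t ^ (b - 1) * (1 - tb / t) ^ 2 :=
  stmt6_general b hb q hq ζ hζ tb t h0 htt
end

section
/- Let b ≥ 5 odd, q = b/2. Consider the implicit equation 1 − ((1−ξ)^b + α)^{1/2} = q (1−ξ)^{b−1} ((1−ξ)^b + α)^{−1/2} ξ near (α, ξ) = (0,0). This equation implicitly defines a function α = φ(ξ) in a neighborhood of 0 with φ(0) = 0, φ'(0) = 0, and the asymptotic α = (b(q−1)/2) ξ² + o(ξ²) as ξ → 0. -/
/-!
Writing `S = √((1 - ξ) ^ b + α)` and `q = b / 2`, the equation says `u - u ^ 2 = q ξ (1 - ξ) ^ (b - 1)`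
for `u = 1 - S`, a quadratic whose root vanishing at `ξ = 0` can be written down explicitly as
`u = ξ w(ξ)` with `w` continuous and `w(0) = q`; this gives `α = S ^ 2 - (1 - ξ) ^ b` in closed form.
Substituting the quadratic back, `α = 1 - b ξ (1 - ξ) ^ (b - 1) - (1 - ξ) ^ b - u ^ 2`, and the
polynomial part is `ξ ^ 2` times a polynomial with value `b (b - 1) / 2` at `0`. Hence
`α = ξ ^ 2 h(ξ)` with `h` continuous and `h(0) = b (b - 1) / 2 - q ^ 2 = b (q - 1) / 2`,
which yields both `α'(0) = 0` and the second-order expansion.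
-/

open Real Filter Asymptotics Topology

lemma one_sub_one_sub_pow_mul_one_add (n : ℕ) (x : ℝ) :
    1 - (1 - x) ^ n * (1 + n * x) = x ^ 2 * ∑ k ∈ Finset.range n, ((k : ℝ) + 1) * (1 - x) ^ k := by
  induction n with
  | zero => simp
  | succ n ih => rw [Finset.sum_range_succ]; push_cast; linear_combination ih

lemma sum_range_cast_add_one (n : ℕ) : ∑ k ∈ Finset.range n, ((k : ℝ) + 1) = n * (n + 1) / 2 := by
  induction n with
  | zero => simp
  | succ n ih => rw [Finset.sum_range_succ, ih]; push_cast; ring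

/-- `x * rootSlope x a` is the root of `u - u ^ 2 = x * a` vanishing at `x = 0`: the root
`(1 - √(1 - 4xa)) / 2`, rationalised so that it is continuous in `x` and `a` everywhere. -/
noncomputable def rootSlope (x a : ℝ) : ℝ := 2 * a / (1 + √(1 - 4 * x * a))

lemma mul_rootSlope_sub_sq {x a : ℝ} (h : 4 * x * a ≤ 1) :
    x * rootSlope x a - (x * rootSlope x a) ^ 2 = x * a := by
  unfold rootSlope
  have hr := Real.sq_sqrt (sub_nonneg.2 h)
  set r := √(1 - 4 * x * a)
  have hpos : 0 < 1 + r := by positivity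
  field_simp
  linear_combination (-(x * a)) * hr

lemma rootSlope_zero (a : ℝ) : rootSlope 0 a = a := by
  simp [rootSlope]; ring

lemma Continuous.rootSlope {f g : ℝ → ℝ} (hf : Continuous f) (hg : Continuous g) :
    Continuous fun x => _root_.rootSlope (f x) (g x) :=
  (continuous_const.mul hg).div (by fun_prop) fun _ => by positivity

lemma isLittleO_sub_mul_sq_of_eventuallyEq_sq_mul {f h : ℝ → ℝ} {L : ℝ}
    (hf : f =ᶠ[𝓝 0] fun x => x ^ 2 * h x) (hh : Tendsto h (𝓝 0) (𝓝 L)) :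
    (fun x => f x - L * x ^ 2) =o[𝓝 0] fun x => x ^ 2 := by
  have : (fun x => x ^ 2 * (h x - L)) =o[𝓝 0] fun x => x ^ 2 * 1 :=
    (isBigO_refl _ _).mul_isLittleO ((isLittleO_one_iff (F := ℝ)).2 (by simpa using hh.sub_const L))
  simp only [mul_one] at this
  refine this.congr' ?_ EventuallyEq.rfl
  filter_upwards [hf] with x hx
  rw [hx]; ring

lemma hasDerivAt_zero_of_eventuallyEq_sq_mul {f h : ℝ → ℝ} {L : ℝ}
    (hf : f =ᶠ[𝓝 0] fun x => x ^ 2 * h x) (hh : Tendsto h (𝓝 0) (𝓝 L)) :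
    HasDerivAt f 0 0 := by
  have hO : f =O[𝓝 0] fun x => ‖x - 0‖ ^ 2 := by
    have : (fun x => x ^ 2 * h x) =O[𝓝 0] fun x => x ^ 2 * 1 :=
      (isBigO_refl _ _).mul (hh.isBigO_one ℝ)
    simpa using (this.congr' hf.symm EventuallyEq.rfl)
  simpa using (hO.hasFDerivAt (𝕜 := ℝ) one_lt_two).hasDerivAt

section Tangency

variable (n : ℕ)

/-- At the tangency point, `1 - ξ * tangentSlope n ξ = √((1 - ξ) ^ (n + 1) + α)` and
`tangentAlpha n ξ` is the corresponding `α`, for the exponent `b = n + 1`. -/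
noncomputable def tangentSlope (ξ : ℝ) : ℝ := rootSlope ξ ((n + 1) / 2 * (1 - ξ) ^ n)

noncomputable def tangentAlpha (ξ : ℝ) : ℝ := (1 - ξ * tangentSlope n ξ) ^ 2 - (1 - ξ) ^ (n + 1)

noncomputable def tangentAlphaDivSq (ξ : ℝ) : ℝ :=
  ∑ k ∈ Finset.range n, ((k : ℝ) + 1) * (1 - ξ) ^ k - tangentSlope n ξ ^ 2

lemma continuous_tangentSlope : Continuous (tangentSlope n) :=
  continuous_id.rootSlope (by fun_prop)

lemma tangentSlope_zero : tangentSlope n 0 = (n + 1) / 2 := by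
  simp [tangentSlope, rootSlope_zero]

lemma tangentAlpha_zero : tangentAlpha n 0 = 0 := by
  simp [tangentAlpha]

lemma eventually_four_mul_le_one :
    ∀ᶠ ξ : ℝ in 𝓝 0, 4 * ξ * ((n + 1) / 2 * (1 - ξ) ^ n) ≤ 1 := by
  have hc : Continuous fun ξ : ℝ => 4 * ξ * ((n + 1) / 2 * (1 - ξ) ^ n) := by fun_prop
  exact (hc.tendsto' 0 0 (by simp)).eventually (eventually_le_nhds one_pos)

lemma tangentAlpha_eq_sq_mul {ξ : ℝ} (h : 4 * ξ * ((n + 1) / 2 * (1 - ξ) ^ n) ≤ 1) :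
    tangentAlpha n ξ = ξ ^ 2 * tangentAlphaDivSq n ξ := by
  have hroot := mul_rootSlope_sub_sq h
  have hpoly := one_sub_one_sub_pow_mul_one_add n ξ
  unfold tangentAlpha tangentAlphaDivSq tangentSlope
  linear_combination (-2) * hroot + hpoly

lemma tendsto_tangentAlphaDivSq :
    Tendsto (tangentAlphaDivSq n) (𝓝 0) (𝓝 (n * (n + 1) / 2 - ((n + 1) / 2) ^ 2)) := by
  have hc : Continuous (tangentAlphaDivSq n) := by
    have := continuous_tangentSlope n
    unfold tangentAlphaDivSq; fun_prop
  simpa [tangentAlphaDivSq, tangentSlope_zero, sum_range_cast_add_one] using hc.tendsto 0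

lemma tangentAlpha_tangency :
    ∀ᶠ ξ in 𝓝 0, 1 - √((1 - ξ) ^ (n + 1) + tangentAlpha n ξ)
      = (n + 1) / 2 * (1 - ξ) ^ n * ξ / √((1 - ξ) ^ (n + 1) + tangentAlpha n ξ) := by
  have hS : ∀ᶠ ξ in 𝓝 0, 0 < 1 - ξ * tangentSlope n ξ := by
    have hc : Continuous fun ξ => 1 - ξ * tangentSlope n ξ := by
      have := continuous_tangentSlope n; fun_prop
    exact (hc.tendsto' 0 1 (by simp)).eventually (eventually_gt_nhds one_pos)
  filter_upwards [eventually_four_mul_le_one n, hS] with ξ h hS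
  have hroot := mul_rootSlope_sub_sq h
  rw [tangentAlpha, add_sub_cancel, Real.sqrt_sq hS.le, eq_div_iff hS.ne']
  unfold tangentSlope
  linear_combination hroot

end Tangency

theorem stmt8_general (b : ℕ) (hb : 5 ≤ b) (q : ℝ) (hq : q = (b : ℝ) / 2) :
    ∃ φ : ℝ → ℝ, φ 0 = 0 ∧ HasDerivAt φ 0 0 ∧
      (∀ᶠ ξ in nhds (0:ℝ),
        1 - Real.sqrt ((1 - ξ) ^ b + φ ξ)
          = q * (1 - ξ) ^ (b - 1) * ξ / Real.sqrt ((1 - ξ) ^ b + φ ξ)) ∧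
      (fun ξ : ℝ => φ ξ - ((b : ℝ) * (q - 1) / 2) * ξ ^ 2)
        =o[nhds (0:ℝ)] (fun ξ : ℝ => ξ ^ 2) := by
  obtain ⟨n, rfl⟩ : ∃ n, b = n + 1 := ⟨b - 1, by omega⟩
  subst hq
  have hα : tangentAlpha n =ᶠ[𝓝 0] fun ξ => ξ ^ 2 * tangentAlphaDivSq n ξ :=
    (eventually_four_mul_le_one n).mono fun ξ h => tangentAlpha_eq_sq_mul n h
  refine ⟨tangentAlpha n, tangentAlpha_zero n,
    hasDerivAt_zero_of_eventuallyEq_sq_mul hα (tendsto_tangentAlphaDivSq n), ?_, ?_⟩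
  · simpa using tangentAlpha_tangency n
  · convert isLittleO_sub_mul_sq_of_eventuallyEq_sq_mul hα (tendsto_tangentAlphaDivSq n) using 4
    push_cast; ring

/-- the implicit equation
`1 − ((1−ξ)^b + α)^{1/2} = q (1−ξ)^{b−1} ((1−ξ)^b + α)^{−1/2} ξ`
near `(α,ξ) = (0,0)` defines a function `α = φ(ξ)` with `φ(0) = 0`, `φ'(0) = 0`,
and `φ(ξ) = (b(q−1)/2) ξ² + o(ξ²)` as `ξ → 0`, where `q = b/2`. -/
theorem stmt8 (b : ℕ) (hb : 5 ≤ b) (hodd : Odd b) (q : ℝ) (hq : q = (b : ℝ) / 2) :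
    ∃ φ : ℝ → ℝ, φ 0 = 0 ∧ HasDerivAt φ 0 0 ∧
      (∀ᶠ ξ in nhds (0:ℝ),
        1 - Real.sqrt ((1 - ξ) ^ b + φ ξ)
          = q * (1 - ξ) ^ (b - 1) * ξ / Real.sqrt ((1 - ξ) ^ b + φ ξ)) ∧
      (fun ξ : ℝ => φ ξ - ((b : ℝ) * (q - 1) / 2) * ξ ^ 2)
        =o[nhds (0:ℝ)] (fun ξ : ℝ => ξ ^ 2) :=
  stmt8_general b hb q hq
end

section
/- Let b ≥ 5 be odd and ε, α > 0 with α = o(ε^q) as ε → 0 (q = b/2). For the square R = [ε^q, ε^q + α] × [ε − α, ε], the weighted area A(∂R) = ∫_{ε−α}^{ε} ∫_{ε^q}^{ε^q+α} 4x₁ (x₁² − x₂^b) dx₁ dx₂ satisfies |A(∂R)| = 4 α³ ε^b (1 + o(1)); in particular |A(∂R)| ≥ 2 α³ ε^b for all sufficiently small ε. -/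
/-!
After integrating out `x₁`, split `x₂ ^ b = ε ^ b + (x₂ ^ b - ε ^ b)`. Since `(ε ^ q) ^ 2 = ε ^ b`,
the terms of order `α` and `α ^ 2` of the main part cancel and it equals exactly
`4 α³ ε^b + 4 ε^q α⁴ + α⁵`, while the remainder `(4 ε^q α + 2 α²) ∫ (x₂ ^ b - ε ^ b)` is at most
`6 ε^q α · b ε^(b-1) α²`. Relative to `α³ ε^b` the three error terms are `4 α / ε^q`, `(α / ε^q)²`
and `6 b ε^q / ε = 6 b ε^(q-1)`, all tending to `0` because `α = o(ε^q)` and `q > 1`.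
-/

open Real Set Filter MeasureTheory Asymptotics intervalIntegral Topology

theorem integral_four_mul_mul_sq_sub (l u c : ℝ) :
    ∫ x in l..u, 4 * x * (x ^ 2 - c) = (u ^ 4 - l ^ 4) - 2 * c * (u ^ 2 - l ^ 2) := by
  have hderiv : ∀ x ∈ uIcc l u,
      HasDerivAt (fun x : ℝ => x ^ 4 - 2 * c * x ^ 2) (4 * x * (x ^ 2 - c)) x := by
    intro x _
    refine ((hasDerivAt_pow 4 x).sub ((hasDerivAt_pow 2 x).const_mul (2 * c))).congr_deriv ?_
    push_cast
    ring
  rw [integral_eq_sub_of_hasDerivAt hderiv (Continuous.intervalIntegrable (by fun_prop) _ _)]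
  ring

theorem abs_integral_pow_sub_pow_le {ε A : ℝ} (n : ℕ) (hA : 0 ≤ A) (hAε : A ≤ ε) :
    |∫ x in (ε - A)..ε, (x ^ n - ε ^ n)| ≤ n * ε ^ (n - 1) * A ^ 2 := by
  have hbound : ∀ x ∈ uIoc (ε - A) ε, ‖x ^ n - ε ^ n‖ ≤ n * ε ^ (n - 1) * A := by
    rintro x ⟨hlo, hhi⟩
    rw [min_eq_left (by linarith)] at hlo
    rw [max_eq_right (by linarith)] at hhi
    have hx : 0 ≤ x := by linarith
    have hε : 0 ≤ ε := hx.trans hhi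
    rw [Real.norm_eq_abs]
    calc |x ^ n - ε ^ n| ≤ |x - ε| * n * max |x| |ε| ^ (n - 1) := abs_pow_sub_pow_le x ε n
      _ ≤ A * n * ε ^ (n - 1) := by
        rw [abs_of_nonneg hx, abs_of_nonneg hε, max_eq_right hhi, abs_sub_comm,
          abs_of_nonneg (by linarith)]
        gcongr ?_ * _ * _
        linarith
      _ = n * ε ^ (n - 1) * A := by ring
  calc _ ≤ n * ε ^ (n - 1) * A * |ε - (ε - A)| := norm_integral_le_of_norm_le_const hbound
    _ = n * ε ^ (n - 1) * A ^ 2 := by rw [sub_sub_cancel, abs_of_nonneg hA]; ring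

theorem integral_weighted_area_eq {a A ε : ℝ} {n : ℕ} (ha : a ^ 2 = ε ^ n) :
    ∫ x₂ in (ε - A)..ε, ∫ x₁ in a..(a + A), 4 * x₁ * (x₁ ^ 2 - x₂ ^ n)
      = 4 * A ^ 3 * ε ^ n + 4 * a * A ^ 4 + A ^ 5
        - 2 * (2 * a * A + A ^ 2) * ∫ x in (ε - A)..ε, (x ^ n - ε ^ n) := by
  have hinner : ∀ x₂ : ℝ, ∫ x₁ in a..(a + A), 4 * x₁ * (x₁ ^ 2 - x₂ ^ n)
      = ((a + A) ^ 4 - a ^ 4 - 2 * ε ^ n * ((a + A) ^ 2 - a ^ 2))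
        - 2 * (2 * a * A + A ^ 2) * (x₂ ^ n - ε ^ n) := by
    intro x₂
    rw [integral_four_mul_mul_sq_sub]
    ring
  simp_rw [hinner]
  rw [integral_sub intervalIntegrable_const (Continuous.intervalIntegrable (by fun_prop) _ _),
    intervalIntegral.integral_const, intervalIntegral.integral_const_mul, smul_eq_mul]
  linear_combination (4 * a * A ^ 2 + 6 * A ^ 3) * ha

theorem abs_weighted_area_sub_le {a A ε : ℝ} {n : ℕ} (ha : a ^ 2 = ε ^ n) (hε : 0 < ε)
    (hA : 0 ≤ A) (hAa : A ≤ a) (hAε : A ≤ ε) :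
    |(∫ x₂ in (ε - A)..ε, ∫ x₁ in a..(a + A), 4 * x₁ * (x₁ ^ 2 - x₂ ^ n)) - 4 * A ^ 3 * ε ^ n|
      ≤ (4 * (A / a) + (A / a) ^ 2 + 6 * n * (a / ε)) * (A ^ 3 * ε ^ n) := by
  have ha0 : 0 < a := by nlinarith [pow_pos hε n, hA.trans hAa]
  rw [integral_weighted_area_eq ha]
  set J := ∫ x in (ε - A)..ε, (x ^ n - ε ^ n)
  have hJ : |J| ≤ n * ε ^ (n - 1) * A ^ 2 := abs_integral_pow_sub_pow_le n hA hAε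
  have hεn : n * (a / ε) * ε ^ n = n * a * ε ^ (n - 1) := by
    rcases n with _ | k
    · simp
    · rw [pow_succ, Nat.add_sub_cancel]
      field_simp
  have hrat : A / a * ε ^ n = A * a := by rw [← ha]; field_simp
  have hrat2 : (A / a) ^ 2 * ε ^ n = A ^ 2 := by rw [← ha]; field_simp
  have hQ : 2 * (2 * a * A + A ^ 2) ≤ 6 * a * A := by nlinarith
  calc _ = |4 * a * A ^ 4 + A ^ 5 - 2 * (2 * a * A + A ^ 2) * J| := by ring_nf
    _ ≤ 4 * a * A ^ 4 + A ^ 5 + 2 * (2 * a * A + A ^ 2) * |J| := by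
      refine (abs_sub _ _).trans ?_
      rw [abs_of_nonneg (by positivity), abs_mul, abs_of_nonneg (by positivity)]
    _ ≤ 4 * a * A ^ 4 + A ^ 5 + 6 * a * A * (n * ε ^ (n - 1) * A ^ 2) :=
      (add_le_add_iff_left _).2 (mul_le_mul hQ hJ (abs_nonneg _) (by positivity))
    _ = _ := by linear_combination (-4 * A ^ 3) * hrat - A ^ 3 * hrat2 - 6 * A ^ 3 * hεn

theorem Asymptotics.isLittleO_of_norm_le_mul_of_tendsto_zero {ι E F : Type*}
    [SeminormedAddCommGroup E] [SeminormedAddCommGroup F] {l : Filter ι} {f : ι → E} {g : ι → F}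
    {m : ι → ℝ} (hm : Tendsto m l (𝓝 0)) (hfg : ∀ᶠ x in l, ‖f x‖ ≤ m x * ‖g x‖) : f =o[l] g := by
  refine isLittleO_iff.2 fun c hc => ?_
  filter_upwards [hfg, hm.eventually (ge_mem_nhds hc)] with x hx hmx
  exact hx.trans (mul_le_mul_of_nonneg_right hmx (norm_nonneg _))

theorem Asymptotics.IsLittleO.abs_sub {ι F : Type*} [SeminormedAddCommGroup F] {l : Filter ι}
    {f c : ι → ℝ} {g : ι → F} (hc : ∀ᶠ x in l, 0 ≤ c x) (h : (fun x => f x - c x) =o[l] g) :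
    (fun x => |f x| - c x) =o[l] g := by
  refine (IsBigO.of_bound' ?_).trans_isLittleO h
  filter_upwards [hc] with x hcx
  have hx := abs_abs_sub_abs_le_abs_sub (f x) (c x)
  rw [abs_of_nonneg hcx] at hx
  simpa only [Real.norm_eq_abs] using hx

theorem Asymptotics.IsLittleO.eventually_mul_le {ι : Type*} {l : Filter ι} {f g : ι → ℝ}
    {a c : ℝ} (hca : c < a) (hg : ∀ᶠ x in l, 0 ≤ g x) (h : (fun x => f x - a * g x) =o[l] g) :
    ∀ᶠ x in l, c * g x ≤ f x := by
  filter_upwards [h.bound (sub_pos.2 hca), hg] with x hx hgx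
  rw [Real.norm_eq_abs, Real.norm_eq_abs, abs_of_nonneg hgx] at hx
  nlinarith [neg_abs_le (f x - a * g x)]

theorem tendsto_rpow_div_self_nhdsGT_zero {q : ℝ} (hq : 1 < q) :
    Tendsto (fun ε : ℝ => ε ^ q / ε) (𝓝[>] 0) (𝓝 0) := by
  have hcont : Tendsto (fun ε : ℝ => ε ^ (q - 1)) (𝓝 0) (𝓝 0) := by
    simpa [zero_rpow (by linarith : q - 1 ≠ 0)] using
      (continuousAt_rpow_const 0 (q - 1) (Or.inr (by linarith))).tendsto
  refine (hcont.mono_left nhdsWithin_le_nhds).congr' ?_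
  filter_upwards [self_mem_nhdsWithin] with ε hε
  exact rpow_sub_one hε.ne' q

theorem rpow_div_two_sq {ε : ℝ} (hε : 0 ≤ ε) (n : ℕ) : (ε ^ ((n : ℝ) / 2)) ^ 2 = ε ^ n := by
  rw [← rpow_mul_natCast hε, Nat.cast_ofNat, div_mul_cancel₀ _ two_ne_zero, rpow_natCast]

theorem isLittleO_weighted_area_sub {b : ℕ} {q : ℝ} (hq : q = (b : ℝ) / 2) (hq1 : 1 < q)
    {α : ℝ → ℝ} (hα0 : ∀ᶠ ε in 𝓝[>] 0, 0 ≤ α ε) (hα : α =o[𝓝[>] 0] fun ε : ℝ => ε ^ q) :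
    (fun ε : ℝ => (∫ x₂ in (ε - α ε)..ε, ∫ x₁ in (ε ^ q)..(ε ^ q + α ε),
        4 * x₁ * (x₁ ^ 2 - x₂ ^ b)) - 4 * (α ε ^ 3 * ε ^ b))
      =o[𝓝[>] 0] fun ε => α ε ^ 3 * ε ^ b := by
  have hpos : ∀ᶠ ε in 𝓝[>] (0 : ℝ), 0 < ε := self_mem_nhdsWithin
  have hle1 : ∀ᶠ ε in 𝓝[>] (0 : ℝ), ε ≤ 1 :=
    (eventually_le_nhds zero_lt_one).filter_mono nhdsWithin_le_nhds
  have hαle : ∀ᶠ ε in 𝓝[>] (0 : ℝ), α ε ≤ ε ^ q := by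
    filter_upwards [hα.bound one_pos, hpos, hα0] with ε h hε hαε
    simpa [abs_of_nonneg hαε, abs_of_pos (rpow_pos_of_pos hε q)] using h
  have hratio : Tendsto (fun ε => 4 * (α ε / ε ^ q) + (α ε / ε ^ q) ^ 2 + 6 * b * (ε ^ q / ε))
      (𝓝[>] 0) (𝓝 0) := by
    have hαq := hα.tendsto_div_nhds_zero
    simpa using ((hαq.const_mul 4).add (hαq.pow 2)).add
      ((tendsto_rpow_div_self_nhdsGT_zero hq1).const_mul (6 * (b : ℝ)))
  refine isLittleO_of_norm_le_mul_of_tendsto_zero hratio ?_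
  filter_upwards [hpos, hle1, hαle, hα0] with ε hε hε1 hαε hA
  rw [Real.norm_eq_abs, Real.norm_eq_abs, abs_of_nonneg (by positivity : 0 ≤ α ε ^ 3 * ε ^ b),
    ← mul_assoc]
  exact abs_weighted_area_sub_le (hq ▸ rpow_div_two_sq hε.le b) hε hA hαε
    (hαε.trans (rpow_le_self_of_le_one hε.le hε1 hq1.le))

theorem stmt9_general (b : ℕ) (hb : 5 ≤ b) (q : ℝ) (hq : q = (b : ℝ) / 2)
    (α : ℝ → ℝ) (hαpos : ∀ ε : ℝ, 0 < ε → 0 < α ε)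
    (hα : α =o[nhdsWithin 0 (Set.Ioi 0)] fun ε : ℝ => ε ^ q) :
    ((fun ε : ℝ =>
        |∫ x₂ in (ε - α ε)..ε, ∫ x₁ in (ε ^ q)..(ε ^ q + α ε),
            4 * x₁ * (x₁ ^ 2 - x₂ ^ b)|
          - 4 * (α ε) ^ 3 * ε ^ b)
      =o[nhdsWithin 0 (Set.Ioi 0)] fun ε : ℝ => (α ε) ^ 3 * ε ^ b) ∧
    (∀ᶠ ε in nhdsWithin 0 (Set.Ioi 0),
      2 * (α ε) ^ 3 * ε ^ b ≤
        |∫ x₂ in (ε - α ε)..ε, ∫ x₁ in (ε ^ q)..(ε ^ q + α ε),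
            4 * x₁ * (x₁ ^ 2 - x₂ ^ b)|) := by
  have hq1 : 1 < q := by
    rw [hq, lt_div_iff₀ two_pos]
    exact_mod_cast (by omega : 1 * 2 < b)
  have hα0 : ∀ᶠ ε in 𝓝[>] (0 : ℝ), 0 < α ε :=
    eventually_nhdsWithin_of_forall hαpos
  have hg : ∀ᶠ ε in 𝓝[>] (0 : ℝ), 0 ≤ α ε ^ 3 * ε ^ b := by
    filter_upwards [hα0, self_mem_nhdsWithin] with ε hαε (hε : 0 < ε)
    positivity
  have hmain := isLittleO_weighted_area_sub hq hq1 (hα0.mono fun _ => le_of_lt) hα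
  have habs := hmain.abs_sub (hg.mono fun _ h => by linarith)
  simp only [mul_assoc] at habs ⊢
  exact ⟨habs, habs.eventually_mul_le (by norm_num : (2 : ℝ) < 4) hg⟩

/-- for `b ≥ 5` odd, `q = b/2`, and `α = α(ε) > 0` with `α = o(ε^q)` as
`ε → 0⁺`, the weighted area of the boundary of the square
`R = [ε^q, ε^q + α] × [ε − α, ε]`, namely
`A(∂R) = ∫∫_R 4x₁(x₁² − x₂^b)`, satisfies `|A(∂R)| = 4α³ε^b(1 + o(1))`;
in particular `|A(∂R)| ≥ 2α³ε^b` for all sufficiently small `ε > 0`. -/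
theorem stmt9 (b : ℕ) (hb : 5 ≤ b) (hodd : Odd b) (q : ℝ) (hq : q = (b : ℝ) / 2)
    (α : ℝ → ℝ) (hαpos : ∀ ε : ℝ, 0 < ε → 0 < α ε)
    (hα : α =o[nhdsWithin 0 (Set.Ioi 0)] fun ε : ℝ => ε ^ q) :
    ((fun ε : ℝ =>
        |∫ x₂ in (ε - α ε)..ε, ∫ x₁ in (ε ^ q)..(ε ^ q + α ε),
            4 * x₁ * (x₁ ^ 2 - x₂ ^ b)|
          - 4 * (α ε) ^ 3 * ε ^ b)
      =o[nhdsWithin 0 (Set.Ioi 0)] fun ε : ℝ => (α ε) ^ 3 * ε ^ b) ∧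
    (∀ᶠ ε in nhdsWithin 0 (Set.Ioi 0),
      2 * (α ε) ^ 3 * ε ^ b ≤
        |∫ x₂ in (ε - α ε)..ε, ∫ x₁ in (ε ^ q)..(ε ^ q + α ε),
            4 * x₁ * (x₁ ^ 2 - x₂ ^ b)|) :=
  stmt9_general b hb q hq α hαpos hα
end

section
/- Let ω : [0, L] → ℝ² be arc-length parametrized (|ω̇| = 1 a.e.), with ω₂(0) = −s and ω₂(L) = ε, where s, ε > 0. Suppose L ≤ s + ε + (C/4)ε for a constant C > 0. If ω₂(t₀) ≥ Cε for some t₀, then ω₂(t) ≥ (C/2)ε for all t ∈ [t₀, L]. -/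
open Real Set Filter

/-- let `ω : [0,L] → ℝ²` be arc-length parametrized (hence `1`-Lipschitz),
with `ω₂(0) = −s` and `ω₂(L) = ε`, `s, ε > 0`. If `L ≤ s + ε + (C/4)ε` for some `C > 0`,
and `ω₂(t₀) ≥ Cε` for some `t₀ ∈ [0,L]`, then `ω₂(t) ≥ (C/2)ε` for all `t ∈ [t₀, L]`. -/
theorem stmt16 (s ε C L : ℝ) (hs : 0 < s) (hε : 0 < ε) (hC : 0 < C)
    (ω : ℝ → ℝ × ℝ)
    (hlip : LipschitzOnWith 1 ω (Set.Icc (0:ℝ) L))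
    (h0 : (ω 0).2 = -s) (hL : (ω L).2 = ε)
    (hlen : L ≤ s + ε + (C / 4) * ε)
    (t₀ : ℝ) (ht₀ : t₀ ∈ Set.Icc (0:ℝ) L) (hω₂ : C * ε ≤ (ω t₀).2) :
    ∀ t ∈ Set.Icc t₀ L, (C / 2) * ε ≤ (ω t).2 := by
  intro t ht
  obtain ⟨ht₀t, htL⟩ := ht
  obtain ⟨h0t₀, ht₀L⟩ := ht₀
  by_contra hcon
  push_neg at hcon
  have key : ∀ a b : ℝ, a ∈ Set.Icc (0:ℝ) L → b ∈ Set.Icc (0:ℝ) L →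
      |(ω a).2 - (ω b).2| ≤ |a - b| := by
    intro a b ha hb
    have h := hlip.dist_le_mul a ha b hb
    rw [NNReal.coe_one, one_mul] at h
    calc |(ω a).2 - (ω b).2| = dist (ω a).2 (ω b).2 := (Real.dist_eq _ _).symm
      _ ≤ dist (ω a) (ω b) := by rw [Prod.dist_eq]; exact le_max_right _ _
      _ ≤ dist a b := h
      _ = |a - b| := Real.dist_eq _ _
  have hmem0 : (0:ℝ) ∈ Set.Icc (0:ℝ) L := ⟨le_refl 0, h0t₀.trans ht₀L⟩
  have hmemt₀ : t₀ ∈ Set.Icc (0:ℝ) L := ⟨h0t₀, ht₀L⟩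
  have hmemt : t ∈ Set.Icc (0:ℝ) L := ⟨h0t₀.trans ht₀t, htL⟩
  have hmemL : L ∈ Set.Icc (0:ℝ) L := ⟨h0t₀.trans ht₀L, le_refl L⟩
  have h1 := key t₀ 0 hmemt₀ hmem0
  have h2 := key t₀ t hmemt₀ hmemt
  have h3 := key L t hmemL hmemt
  rw [h0, sub_zero, abs_of_nonneg h0t₀] at h1
  rw [hL, abs_of_nonneg (show (0:ℝ) ≤ L - t by linarith)] at h3
  rw [abs_sub_comm t₀ t, abs_of_nonneg (show (0:ℝ) ≤ t - t₀ by linarith)] at h2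
  have e1 : (ω t₀).2 - -s ≤ t₀ := le_trans (le_abs_self _) h1
  have e2 : (ω t₀).2 - (ω t).2 ≤ t - t₀ := le_trans (le_abs_self _) h2
  have e3 : ε - (ω t).2 ≤ L - t := le_trans (le_abs_self _) h3
  nlinarith [mul_pos hC hε]
end
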